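/- arXiv:1301.0695 — 5 statements merged into one kernel-verified Lean document; each statement's English description precedes it below -/
import Mathlib

section
/- Let L/k be a Galois field extension of degree 2, let σ be the nontrivial element of Gal(L|k), and let ν ∈ k be nonzero. Let M be the 2×2 matrix over L with rows (0, ν) and (1, 0) (entries taken via the embedding of k into L). Then there exist an invertible 2×2 matrix N over L and an element λ ∈ L satisfying N^σ · M = λ • N (where N^σ denotes the matrix obtained by applying σ to every entry of N) if and only if there exists λ ∈ L with σ(λ)·λ = ν, i.e. if and only if ν is a norm for the extension L/k. -/
/-!
Comparing entries, `N^σ M = λ N` says that every row `(x, y)` of `N` satisfies `σ y = λ x` and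
`σ x · ν = λ y`. As `σ` is an involution, the first equation forces `y = σλ · σx`, and the second
then reads `σx · ν = λ · σλ · σx`; a row with `x ≠ 0`, which exists because `N` is invertible,
gives `ν = σλ · λ`. Conversely, if `ν = σλ · λ` then every row `(x, σλ · σx)` satisfies both
equations, and the rows for `x = 1` and `x = a` with `σ a ≠ a` form a matrix of determinant
`σλ (σa - a) ≠ 0`.
-/

open Module

theorem pow_two_eq_one_of_natCard_le_two {G : Type*} [Group G] [Finite G] (hG : Nat.card G ≤ 2)
    (g : G) : g ^ 2 = 1 := by
  have hpos : 0 < orderOf g := orderOf_pos g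
  have hle : orderOf g ≤ 2 := (Nat.le_of_dvd Nat.card_pos (orderOf_dvd_natCard g)).trans hG
  rw [← orderOf_dvd_iff_pow_eq_one]
  interval_cases orderOf g <;> norm_num

namespace AlgEquiv

variable {k L : Type*} [Field k] [Field L] [Algebra k L]

theorem natCard_le_finrank [FiniteDimensional k L] : Nat.card (L ≃ₐ[k] L) ≤ finrank k L :=
  (Nat.card_le_card_of_injective _ coe_toAlgHom_injective).trans (card_algHom_le_finrank k L L)

theorem involutive_of_finrank_eq_two (h : finrank k L = 2) (σ : L ≃ₐ[k] L) :
    Function.Involutive σ := by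
  have : FiniteDimensional k L := finite_of_finrank_pos (by omega)
  have hσ : σ * σ = 1 := by rw [← sq, pow_two_eq_one_of_natCard_le_two (h ▸ natCard_le_finrank)]
  exact fun x ↦ congrArg (· x) hσ

end AlgEquiv

theorem Matrix.map_mul_eq_smul_iff_forall_row {R : Type*} [Semiring R] (f : R → R)
    (N : Matrix (Fin 2) (Fin 2) R) (c lam : R) :
    N.map f * !![0, c; 1, 0] = lam • N ↔
      ∀ i, f (N i 1) = lam * N i 0 ∧ f (N i 0) * c = lam * N i 1 := by
  simp [← Matrix.ext_iff, Fin.forall_fin_two, Matrix.mul_apply, Fin.sum_univ_two]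

section TwistedRow

variable {L F : Type*} [CommRing L] [FunLike F L L] [RingHomClass F L L] {σ : F} {lam c : L}

theorem apply_mul_eq_of_twisted_row [IsDomain L] (hσ : Function.Involutive σ) {x y : L}
    (hx : x ≠ 0) (h₁ : σ y = lam * x) (h₂ : σ x * c = lam * y) : σ lam * lam = c := by
  have hy : y = σ lam * σ x := by rw [← hσ y, h₁, map_mul]
  have hσx : σ x ≠ 0 := fun h ↦ hx (by rw [← hσ x, h, map_zero])
  refine mul_left_cancel₀ hσx ?_
  rw [h₂, hy]
  ring

theorem twisted_row_of_apply_mul_eq (hσ : Function.Involutive σ) (h : σ lam * lam = c) (x : L) :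
    σ (σ lam * σ x) = lam * x ∧ σ x * c = lam * (σ lam * σ x) := by
  refine ⟨by rw [map_mul, hσ lam, hσ x], ?_⟩
  rw [← h]
  ring

end TwistedRow

theorem stmt2_general {k L : Type*} [Field k] [Field L] [Algebra k L]
    (hdeg : Module.finrank k L = 2) (σ : L ≃ₐ[k] L) (hσ : σ ≠ 1)
    (ν : k) (hν : ν ≠ 0) :
    (∃ (N : Matrix (Fin 2) (Fin 2) L) (lam : L), IsUnit N.det ∧
        N.map σ * !![0, algebraMap k L ν; 1, 0] = lam • N) ↔
      ∃ lam : L, σ lam * lam = algebraMap k L ν := by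
  have hinv := AlgEquiv.involutive_of_finrank_eq_two hdeg σ
  constructor
  · rintro ⟨N, lam, hdet, hN⟩
    obtain ⟨i, hi⟩ : ∃ i, N i 0 ≠ 0 := by
      by_contra! h
      exact hdet.ne_zero (Matrix.det_eq_zero_of_column_eq_zero 0 h)
    obtain ⟨h₁, h₂⟩ := (Matrix.map_mul_eq_smul_iff_forall_row _ N _ lam).1 hN i
    exact ⟨lam, apply_mul_eq_of_twisted_row hinv hi h₁ h₂⟩
  · rintro ⟨lam, hlam⟩
    have hlam0 : lam ≠ 0 := by
      rintro rfl
      exact hν (by simpa using hlam.symm)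
    obtain ⟨a, ha⟩ : ∃ a, σ a ≠ a := not_forall.1 fun h ↦ hσ (AlgEquiv.ext h)
    refine ⟨!![1, σ lam; a, σ lam * σ a], lam, ?_, ?_⟩
    · have hdet : (!![1, σ lam; a, σ lam * σ a]).det = σ lam * (σ a - a) := by
        rw [Matrix.det_fin_two_of]
        ring
      rw [hdet]
      exact (mul_ne_zero (by simpa using hlam0) (sub_ne_zero.2 ha)).isUnit
    · rw [Matrix.map_mul_eq_smul_iff_forall_row]
      intro i
      fin_cases i
      · simpa using twisted_row_of_apply_mul_eq hinv hlam 1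
      · simpa using twisted_row_of_apply_mul_eq hinv hlam a

/-- Let `L/k` be a Galois extension of degree `2` with nontrivial automorphism `σ`,
and let `ν ∈ k` be nonzero.  For the matrix `M = !![0, ν; 1, 0]` over `L`, there exist
an invertible matrix `N` over `L` and `λ ∈ L` with `N^σ * M = λ • N` if and only if
`ν` is a norm for the extension `L/k`, i.e. `σ(λ)·λ = ν` for some `λ ∈ L`. -/
theorem stmt2 {k L : Type*} [Field k] [Field L] [Algebra k L] [IsGalois k L]
    (hdeg : Module.finrank k L = 2) (σ : L ≃ₐ[k] L) (hσ : σ ≠ 1)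
    (ν : k) (hν : ν ≠ 0) :
    (∃ (N : Matrix (Fin 2) (Fin 2) L) (lam : L), IsUnit N.det ∧
        N.map σ * !![0, algebraMap k L ν; 1, 0] = lam • N) ↔
      ∃ lam : L, σ lam * lam = algebraMap k L ν :=
  stmt2_general hdeg σ hσ ν hν
end

section
/- Let K be a field of characteristic different from 2, let n be a natural number, and let s, t, s', t' : {1,…,n} → K. Suppose that s_i + t_i = s'_i + t'_i for all i, and that s_i t_j + s_j t_i = s'_i t'_j + s'_j t'_i for all i, j (in particular, taking i = j, 2 s_i t_i = 2 s'_i t'_i for all i). Then either s'_i = s_i and t'_i = t_i for all i, or s'_i = t_i and t'_i = s_i for all i. -/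
/-!
The diagonal relations `2 sᵢtᵢ = 2 s'ᵢt'ᵢ` and `sᵢ + tᵢ = s'ᵢ + t'ᵢ` say that `{s'ᵢ, t'ᵢ}` and
`{sᵢ, tᵢ}` are the root sets of the same monic quadratic, so each coordinate is either fixed or
swapped. If some coordinate `i` with `sᵢ ≠ tᵢ` is swapped and `j` is fixed, the mixed relation
for `(i, j)` reduces to `(sᵢ - tᵢ)(tⱼ - sⱼ) = 0`, so `sⱼ = tⱼ` and `j` is swapped as well.
-/

theorem eq_and_eq_or_eq_and_eq_of_add_eq_of_mul_eq {R : Type*} [CommRing R] [NoZeroDivisors R]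
    {a b c d : R} (hsum : a + b = c + d) (hprod : a * b = c * d) :
    (c = a ∧ d = b) ∨ (c = b ∧ d = a) := by
  have hroot : (c - a) * (c - b) = 0 := by linear_combination (-c) * hsum + hprod
  rcases mul_eq_zero.1 hroot with hca | hcb
  · have hca : c = a := sub_eq_zero.1 hca
    exact Or.inl ⟨hca, by linear_combination -hsum - hca⟩
  · have hcb : c = b := sub_eq_zero.1 hcb
    exact Or.inr ⟨hcb, by linear_combination -hsum - hcb⟩

theorem eq_or_eq_of_mul_add_mul_eq {R : Type*} [CommRing R] [NoZeroDivisors R] {a b c d : R}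
    (h : a * d + c * b = b * d + c * a) : a = b ∨ c = d := by
  have hprod : (a - b) * (d - c) = 0 := by linear_combination h
  rcases mul_eq_zero.1 hprod with hab | hcd
  · exact Or.inl (sub_eq_zero.1 hab)
  · exact Or.inr (sub_eq_zero.1 hcd).symm

/-- Over a field of characteristic `≠ 2`, the symmetric functions `s i + t i` and
`s i * t j + s j * t i` determine the tuple `(s, t)` up to the simultaneous
exchange `s i ↔ t i` for all `i`. -/
theorem stmt3 {K : Type*} [Field K] (hchar : (2 : K) ≠ 0) (n : ℕ)
    (s t s' t' : Fin n → K)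
    (h1 : ∀ i, s i + t i = s' i + t' i)
    (h2 : ∀ i j, s i * t j + s j * t i = s' i * t' j + s' j * t' i) :
    (∀ i, s' i = s i ∧ t' i = t i) ∨ (∀ i, s' i = t i ∧ t' i = s i) := by
  have hdiag (i : Fin n) : s i * t i = s' i * t' i :=
    mul_left_cancel₀ hchar (by linear_combination h2 i i)
  have hpoint (i : Fin n) : (s' i = s i ∧ t' i = t i) ∨ (s' i = t i ∧ t' i = s i) :=
    eq_and_eq_or_eq_and_eq_of_add_eq_of_mul_eq (h1 i) (hdiag i)
  by_cases hfix : ∀ i, s' i = s i ∧ t' i = t i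
  · exact Or.inl hfix
  obtain ⟨i, hi⟩ := not_forall.1 hfix
  have hswap_i := (hpoint i).resolve_left hi
  have hne : s i ≠ t i := fun h => hi ⟨hswap_i.1.trans h.symm, hswap_i.2.trans h⟩
  refine Or.inr fun j => (hpoint j).elim (fun hfix_j => ?_) id
  have hmixed := h2 i j
  rw [hswap_i.1, hswap_i.2, hfix_j.1, hfix_j.2] at hmixed
  have hj : s j = t j := (eq_or_eq_of_mul_add_mul_eq hmixed).resolve_left hne
  exact ⟨hfix_j.1.trans hj, hfix_j.2.trans hj.symm⟩
end

section
/- Let r ≥ 2 be an integer and let c : {1,…,r} → ℤ be such that c_i > 0 for some index i and c_j < 0 for some index j. Then there exists a ℤ-basis b_1, …, b_r of the free module ℤ^r such that every entry of every basis vector b_t is strictly positive, such that Σ_j c_j·(b_t)_j = 0 for all t ≤ r−1, and such that b_1, …, b_{r−1} form a ℤ-basis of the subgroup {v ∈ ℤ^r : Σ_j c_j·v_j = 0}. -/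
/-! Let `P` and `N` be the sums of the positive and of the negative parts of `c`, and
`g = gcd P N`. The vector `u` with entry `N / g` where `c` is nonnegative and `P / g` elsewhere
is a positive kernel vector with two coprime entries, so by Bézout some functional takes the
value `1` on it and `u` extends to a basis of the kernel `K`. Adding large multiples of `u` to
the other basis vectors (a transvection) makes all of them positive. Finally `ℤ^r = K ⊕ ℤ y`
for any `y` whose image generates the image of `v ↦ c ⬝ᵥ v`, and `y` can be made positive by
adding a multiple of `u` as well. -/

open Module Matrix Submodule LinearMap

namespace Module.Basis

variable {ι R M : Type*}

theorem exists_eq_add_smul [CommRing R] [AddCommGroup M] [Module R M]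
    (B : Basis ι R M) (i₀ : ι) (m : ι → R) (hm : m i₀ = 0) :
    ∃ B' : Basis ι R M, ∀ t, B' t = B t + m t • B i₀ := by
  have h : B.constr R m (B i₀) = 0 := by rwa [constr_basis]
  exact ⟨B.map (LinearEquiv.transvection h), fun t => by
    rw [map_apply, LinearEquiv.transvection.apply, constr_basis]⟩

theorem exists_eq_snoc_of_ker [CommRing R] [NoZeroDivisors R] [AddCommGroup M] [Module R M]
    {n : ℕ} (f : M →ₗ[R] R) (b : Basis (Fin n) R (ker f)) (y : M) (hy : f y ≠ 0)
    (hdvd : ∀ z, f y ∣ f z) :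
    ∃ B : Basis (Fin (n + 1)) R M, ⇑B = Fin.snoc ((↑) ∘ b) y := by
  refine ⟨mkFinSnoc b y (fun a x hx h => ?_) (fun z => ?_), coe_mkFinSnoc ..⟩
  · have := congrArg f h
    rw [map_add, map_smul, mem_ker.mp hx, smul_eq_mul, add_zero, map_zero] at this
    exact (mul_eq_zero.mp this).resolve_right hy
  · obtain ⟨a, ha⟩ := hdvd z
    refine ⟨-a, mem_ker.mpr ?_⟩
    rw [map_add, map_smul, ha, smul_eq_mul]
    ring

end Module.Basis

theorem Module.Dual.exists_apply_ne_zero_dvd {R M : Type*} [CommRing R] [IsDomain R]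
    [IsPrincipalIdealRing R] [AddCommGroup M] [Module R M] (f : Dual R M) (hf : f ≠ 0) :
    ∃ y, f y ≠ 0 ∧ ∀ z, f y ∣ f z := by
  obtain ⟨y, hy⟩ := IsPrincipal.generator_mem (range f)
  refine ⟨y, fun h0 => hf (range_eq_bot.mp ?_), fun z => ?_⟩
  · rw [← IsPrincipal.span_singleton_generator (range f), ← hy, h0, span_singleton_eq_bot]
  · obtain ⟨s, hs⟩ := (IsPrincipal.mem_iff_eq_smul_generator (range f)).mp (mem_range_self f z)
    exact ⟨s, by rw [hs, ← hy, smul_eq_mul, mul_comm]⟩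

theorem Module.Dual.exists_apply_eq_one_of_isCoprime {ι R : Type*} [CommRing R]
    {v : ι → R} {i j : ι} (h : IsCoprime (v i) (v j)) :
    ∃ φ : Dual R (ι → R), φ v = 1 := by
  obtain ⟨a, b, hab⟩ := h
  exact ⟨a • proj i + b • proj j, by simpa using hab⟩

section Positive

variable {ι : Type*} [Fintype ι]

theorem exists_pos_add_mul (u v : ι → ℤ) (hu : ∀ i, 0 < u i) :
    ∃ m : ℤ, ∀ i, 0 < v i + m * u i := by
  refine ⟨∑ i, |v i| + 1, fun i => ?_⟩
  have hvi : |v i| ≤ ∑ i, |v i| :=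
    Finset.single_le_sum (fun i _ => abs_nonneg (v i)) (Finset.mem_univ i)
  have hui : 1 ≤ u i := hu i
  nlinarith [neg_abs_le (v i), abs_nonneg (v i)]

theorem Submodule.exists_basis_pos {κ : Type*} {K : Submodule ℤ (ι → ℤ)} (B : Basis κ ℤ K)
    (i₀ : κ) (hB : ∀ i, 0 < (B i₀ : ι → ℤ) i) :
    ∃ B' : Basis κ ℤ K, ∀ t i, 0 < (B' t : ι → ℤ) i := by
  classical
  choose m hm using fun t => exists_pos_add_mul (B i₀ : ι → ℤ) (B t) hB
  obtain ⟨B', hB'⟩ := B.exists_eq_add_smul i₀ (Function.update m i₀ 0) (by simp)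
  refine ⟨B', fun t i => ?_⟩
  rw [hB', coe_add, coe_smul, Pi.add_apply, Pi.smul_apply, smul_eq_mul]
  by_cases ht : t = i₀
  · subst ht
    simpa using hB i
  · simpa [ht] using hm t i

theorem Submodule.exists_basis_pos_of_apply_eq_one {K : Submodule ℤ (ι → ℤ)} {u : ι → ℤ}
    (hu : u ∈ K) (hu_pos : ∀ i, 0 < u i) (φ : Dual ℤ (ι → ℤ)) (hφ : φ u = 1) :
    ∃ (k : ℕ) (B : Basis (Fin k) ℤ K), ∀ t i, 0 < (B t : ι → ℤ) i := by
  set f := φ ∘ₗ K.subtype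
  have hf : f ⟨u, hu⟩ = 1 := hφ
  obtain ⟨B, hB⟩ := Basis.exists_eq_snoc_of_ker f (finBasis ℤ (ker f)) ⟨u, hu⟩
    (by simp [hf]) (fun z => hf ▸ one_dvd _)
  obtain ⟨B', hB'⟩ := exists_basis_pos B (Fin.last _) (by simpa [hB] using hu_pos)
  exact ⟨_, B', hB'⟩

theorem Module.Dual.exists_pos_apply_ne_zero_dvd (F : Dual ℤ (ι → ℤ)) (hF : F ≠ 0)
    {u : ι → ℤ} (hu_pos : ∀ i, 0 < u i) (hu : F u = 0) :
    ∃ y : ι → ℤ, (∀ i, 0 < y i) ∧ F y ≠ 0 ∧ ∀ z, F y ∣ F z := by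
  obtain ⟨y, hy0, hdvd⟩ := F.exists_apply_ne_zero_dvd hF
  obtain ⟨m, hm⟩ := exists_pos_add_mul u y hu_pos
  have hFy : F (y + m • u) = F y := by rw [map_add, map_smul, hu, smul_zero, add_zero]
  exact ⟨y + m • u, hm, hFy ▸ hy0, hFy ▸ hdvd⟩

theorem dotProduct_ite_nonneg (c : ι → ℤ) (a b : ℤ) :
    c ⬝ᵥ (fun j => if 0 ≤ c j then a else b) =
      a * ∑ j, max (c j) 0 - b * ∑ j, max (-c j) 0 := by
  rw [Finset.mul_sum, Finset.mul_sum, ← Finset.sum_sub_distrib]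
  refine Finset.sum_congr rfl fun j _ => ?_
  dsimp only
  split_ifs with h
  · rw [max_eq_left h, max_eq_right (by omega)]; ring
  · rw [max_eq_right (by omega), max_eq_left (by omega)]; ring

theorem exists_pos_dotProduct_eq_zero (c : ι → ℤ) (hpos : ∃ i, 0 < c i) (hneg : ∃ j, c j < 0) :
    ∃ u : ι → ℤ, (∀ i, 0 < u i) ∧ c ⬝ᵥ u = 0 ∧ ∃ φ : Dual ℤ (ι → ℤ), φ u = 1 := by
  obtain ⟨i₀, hi₀⟩ := hpos
  obtain ⟨j₀, hj₀⟩ := hneg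
  have hP : 0 < ∑ j, max (c j) 0 :=
    Finset.sum_pos' (fun j _ => le_max_right _ _) ⟨i₀, Finset.mem_univ _, lt_max_of_lt_left hi₀⟩
  have hN : 0 < ∑ j, max (-c j) 0 :=
    Finset.sum_pos' (fun j _ => le_max_right _ _)
      ⟨j₀, Finset.mem_univ _, lt_max_of_lt_left (by omega)⟩
  obtain ⟨g, P, N, hg, hPN, hPg, hNg⟩ :=
    Int.exists_gcd_one' (Int.gcd_pos_of_ne_zero_left (∑ j, max (-c j) 0) hP.ne')
  have hg' : (0 : ℤ) < g := by exact_mod_cast hg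
  refine ⟨fun j => if 0 ≤ c j then N else P, fun i => ?_, ?_, ?_⟩
  · dsimp only
    split_ifs
    · exact pos_of_mul_pos_left (hNg ▸ hN) hg'.le
    · exact pos_of_mul_pos_left (hPg ▸ hP) hg'.le
  · rw [dotProduct_ite_nonneg, hPg, hNg]
    ring
  · refine Dual.exists_apply_eq_one_of_isCoprime (i := j₀) (j := i₀) ?_
    simpa [hi₀.le, not_le.mpr hj₀] using Int.isCoprime_iff_gcd_eq_one.mpr hPN

end Positive

theorem stmt6_general (r : ℕ) (c : Fin r → ℤ)
    (hpos : ∃ i, 0 < c i) (hneg : ∃ j, c j < 0) :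
    ∃ (b : Fin r → Fin r → ℤ) (B : Module.Basis (Fin r) ℤ (Fin r → ℤ)),
      (∀ t, B t = b t) ∧
      (∀ t i, 0 < b t i) ∧
      (∀ t : Fin r, (t : ℕ) < r - 1 → ∑ j, c j * b t j = 0) ∧
      (∀ v : Fin r → ℤ, ∑ j, c j * v j = 0 →
        v ∈ Submodule.span ℤ
          (Set.range fun t : Fin (r - 1) => b (Fin.castLE (Nat.sub_le r 1) t))) := by
  set F := dotProductEquiv ℤ (Fin r) c
  have hF : F ≠ 0 := by
    obtain ⟨i, hi⟩ := hpos
    refine fun h => hi.ne' ?_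
    simpa [F] using LinearMap.congr_fun h (Pi.single i 1)
  obtain ⟨u, hu_pos, hu, φ, hφ⟩ := exists_pos_dotProduct_eq_zero c hpos hneg
  obtain ⟨k, b, hb⟩ :=
    (ker F).exists_basis_pos_of_apply_eq_one (by simpa [F] using hu) hu_pos φ hφ
  obtain ⟨y, hy_pos, hy0, hdvd⟩ := F.exists_pos_apply_ne_zero_dvd hF hu_pos (by simpa [F] using hu)
  obtain ⟨C, hC⟩ := Basis.exists_eq_snoc_of_ker F b y hy0 hdvd
  have hk : k + 1 = r := by simpa using (finrank_eq_card_basis C).symm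
  have hCb : ∀ (t : Fin r) (ht : (t : ℕ) < k), C.reindex (finCongr hk) t = b ⟨t, ht⟩ := by
    intro t ht
    rw [Basis.reindex_apply, hC, show (finCongr hk).symm t = Fin.castSucc ⟨t, ht⟩ from rfl,
      Fin.snoc_castSucc, Function.comp_apply]
  refine ⟨_, C.reindex (finCongr hk), fun _ => rfl, fun t i => ?_, fun t ht => ?_, fun v hv => ?_⟩
  · rw [Basis.reindex_apply, hC]
    induction (finCongr hk).symm t using Fin.lastCases with
    | last => simpa using hy_pos i
    | cast s => simpa using hb s i
  · rw [hCb t (by omega)]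
    exact (b _).2
  · have hvK : v ∈ span ℤ (Set.range ((ker F).subtype ∘ b)) := by
      rw [Set.range_comp, span_image, b.span_eq, map_subtype_top]
      exact hv
    refine span_mono ?_ hvK
    rintro _ ⟨s, rfl⟩
    exact ⟨⟨s, by omega⟩, hCb _ _⟩

/-- If an integer vector `c` (of length `r ≥ 2`) has both a strictly positive and a
strictly negative entry, then `ℤ^r` has a basis `b 0, …, b (r-1)` all of whose
vectors have strictly positive entries, such that the first `r - 1` basis vectors
lie in the kernel `{v : ∑ c j * v j = 0}` and form a `ℤ`-basis of this kernel
(they are part of a basis of `ℤ^r`, hence linearly independent, and they span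
the kernel). -/
theorem stmt6 (r : ℕ) (hr : 2 ≤ r) (c : Fin r → ℤ)
    (hpos : ∃ i, 0 < c i) (hneg : ∃ j, c j < 0) :
    ∃ (b : Fin r → Fin r → ℤ) (B : Module.Basis (Fin r) ℤ (Fin r → ℤ)),
      (∀ t, B t = b t) ∧
      (∀ t i, 0 < b t i) ∧
      (∀ t : Fin r, (t : ℕ) < r - 1 → ∑ j, c j * b t j = 0) ∧
      (∀ v : Fin r → ℤ, ∑ j, c j * v j = 0 →
        v ∈ Submodule.span ℤ
          (Set.range fun t : Fin (r - 1) => b (Fin.castLE (Nat.sub_le r 1) t))) :=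
  stmt6_general r c hpos hneg
end

section
/- Let K be an algebraically closed field, let n ≥ 1 and ℓ ≥ 2 be integers, and set m = 2ℓ. Let a, a' : {0,…,m} → K be coefficient tuples such that a_i ≠ 0 for all i with ℓ+2 ≤ i ≤ 2ℓ and a_{ℓ−1} ≠ 0, and likewise a'_i ≠ 0 for all ℓ+2 ≤ i ≤ 2ℓ and a'_{ℓ−1} ≠ 0. Suppose there is a nonzero c ∈ K such that: a'_ℓ = c·a_ℓ; a'_{2ℓ−j}·a'_j = c²·a_{2ℓ−j}·a_j for all 0 ≤ j ≤ ℓ−1; and a'_{ℓ+i}·(a'_{ℓ−1})^i = c^{i+1}·a_{ℓ+i}·(a_{ℓ−1})^i for all 2 ≤ i ≤ ℓ. Then there exist nonzero λ, μ, e ∈ K such that a'_i = e·λ^{i·n}·μ^{(m−i)·n}·a_i for all 0 ≤ i ≤ m. -/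
/-! With `u := c · a_{ℓ-1} / a'_{ℓ-1}`, the invariants `J₁`, `J_{2,ℓ-1}` and `J_i` give
`a'_{ℓ+k} = c · u^k · a_{ℓ+k}` for `0 ≤ k ≤ ℓ`; dividing `J_{2,ℓ-k}` by this (possible since
`a_{ℓ+k} ≠ 0` for `k ≥ 2`) gives `a'_{ℓ-k} · u^k = c · a_{ℓ-k}`. Hence `a'_i = e · u^i · a_i` with
`e = c · u^{-ℓ}`, and an `n`-th root `λ` of `u` together with `μ = 1` realises this ratio as a
diagonal transformation. -/

section

variable {K : Type*} [Field K]

lemma eq_mul_pow_mul_of_mul_pow_eq {x y r s c u : K} (k : ℕ) (hs : s ≠ 0)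
    (hu : s * u = c * r) (h : y * s ^ k = c ^ (k + 1) * (x * r ^ k)) :
    y = c * u ^ k * x := by
  refine mul_right_cancel₀ (pow_ne_zero k hs) ?_
  calc y * s ^ k = c * x * (c * r) ^ k := by rw [h]; ring
    _ = c * u ^ k * x * s ^ k := by rw [← hu]; ring

lemma mul_pow_eq_mul_of_mul_eq_sq_mul {x x' y y' c u : K} (k : ℕ) (hc : c ≠ 0) (hy : y ≠ 0)
    (hy' : y' = c * u ^ k * y) (h : y' * x' = c ^ 2 * (y * x)) :
    x' * u ^ k = c * x :=
  mul_left_cancel₀ (mul_ne_zero hc hy) (by rw [hy'] at h; linear_combination h)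

lemma exists_diagonal_of_eq_mul_pow_mul [IsAlgClosed K] {n N : ℕ} (hn : 1 ≤ n) {a a' : ℕ → K}
    {e u : K} (he : e ≠ 0) (hu : u ≠ 0) (h : ∀ i ≤ N, a' i = e * u ^ i * a i) :
    ∃ lam mu e : K, lam ≠ 0 ∧ mu ≠ 0 ∧ e ≠ 0 ∧
      ∀ i ≤ N, a' i = e * (lam ^ (i * n) * mu ^ ((N - i) * n) * a i) := by
  obtain ⟨lam, hlam⟩ := IsAlgClosed.exists_pow_nat_eq u hn
  refine ⟨lam, 1, e, ?_, one_ne_zero, he, fun i hi => ?_⟩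
  · rintro rfl
    exact hu (by rw [← hlam, zero_pow (by omega)])
  · rw [h i hi, one_pow, mul_comm i n, pow_mul, hlam]
    ring

variable {ℓ : ℕ} {a a' : ℕ → K} {c u : K}

lemma upper_coeff_eq (hs : a' (ℓ - 1) ≠ 0)
    (hu : a' (ℓ - 1) * u = c * a (ℓ - 1)) (hJ1 : a' ℓ = c * a ℓ)
    (hJ2 : a' (ℓ + 1) * a' (ℓ - 1) = c ^ 2 * (a (ℓ + 1) * a (ℓ - 1)))
    (hJi : ∀ i, 2 ≤ i → i ≤ ℓ →
      a' (ℓ + i) * a' (ℓ - 1) ^ i = c ^ (i + 1) * (a (ℓ + i) * a (ℓ - 1) ^ i))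
    {k : ℕ} (hk : k ≤ ℓ) : a' (ℓ + k) = c * u ^ k * a (ℓ + k) := by
  refine eq_mul_pow_mul_of_mul_pow_eq k hs hu ?_
  match k with
  | 0 => simpa using hJ1
  | 1 => simpa using hJ2
  | k + 2 => exact hJi (k + 2) (by omega) hk

lemma lower_coeff_eq (hc : c ≠ 0) (hu : a' (ℓ - 1) * u = c * a (ℓ - 1))
    (hJ1 : a' ℓ = c * a ℓ) (ha : ∀ i, ℓ + 2 ≤ i → i ≤ 2 * ℓ → a i ≠ 0)
    (hJ2 : ∀ j ≤ ℓ - 1, a' (2 * ℓ - j) * a' j = c ^ 2 * (a (2 * ℓ - j) * a j))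
    (hupper : ∀ k ≤ ℓ, a' (ℓ + k) = c * u ^ k * a (ℓ + k))
    {k : ℕ} (hk : k ≤ ℓ) : a' (ℓ - k) * u ^ k = c * a (ℓ - k) := by
  match k with
  | 0 => simpa using hJ1
  | 1 => simpa using hu
  | k + 2 =>
    have hJ := hJ2 (ℓ - (k + 2)) (by omega)
    rw [show 2 * ℓ - (ℓ - (k + 2)) = ℓ + (k + 2) by omega] at hJ
    exact mul_pow_eq_mul_of_mul_eq_sq_mul _ hc (ha _ (by omega) (by omega)) (hupper _ hk) hJ

lemma coeff_eq_mul_pow_mul (hu0 : u ≠ 0)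
    (hupper : ∀ k ≤ ℓ, a' (ℓ + k) = c * u ^ k * a (ℓ + k))
    (hlower : ∀ k ≤ ℓ, a' (ℓ - k) * u ^ k = c * a (ℓ - k)) :
    ∀ i ≤ 2 * ℓ, a' i = c / u ^ ℓ * u ^ i * a i := by
  intro i hi
  rcases le_total ℓ i with hℓi | hiℓ
  · obtain ⟨k, rfl⟩ := Nat.exists_eq_add_of_le hℓi
    rw [hupper k (by omega)]
    field_simp
    ring
  · obtain ⟨k, rfl⟩ := Nat.exists_eq_add_of_le hiℓ
    have h := hlower k (by omega)
    rw [Nat.add_sub_cancel] at h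
    field_simp
    linear_combination u ^ i * h

end

theorem stmt7_general {K : Type*} [Field K] [IsAlgClosed K] (n ℓ : ℕ) (hn : 1 ≤ n)
    (hℓ : 2 ≤ ℓ) (a a' : ℕ → K)
    (ha1 : ∀ i, ℓ + 2 ≤ i → i ≤ 2 * ℓ → a i ≠ 0) (ha2 : a (ℓ - 1) ≠ 0)
    (ha2' : a' (ℓ - 1) ≠ 0)
    (c : K) (hc : c ≠ 0)
    (hJ1 : a' ℓ = c * a ℓ)
    (hJ2 : ∀ j ≤ ℓ - 1, a' (2 * ℓ - j) * a' j = c ^ 2 * (a (2 * ℓ - j) * a j))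
    (hJi : ∀ i, 2 ≤ i → i ≤ ℓ →
      a' (ℓ + i) * a' (ℓ - 1) ^ i = c ^ (i + 1) * (a (ℓ + i) * a (ℓ - 1) ^ i)) :
    ∃ lam mu e : K, lam ≠ 0 ∧ mu ≠ 0 ∧ e ≠ 0 ∧
      ∀ i ≤ 2 * ℓ, a' i = e * (lam ^ (i * n) * mu ^ ((2 * ℓ - i) * n) * a i) := by
  set u := c * a (ℓ - 1) / a' (ℓ - 1)
  have hu0 : u ≠ 0 := div_ne_zero (mul_ne_zero hc ha2) ha2'
  have hu : a' (ℓ - 1) * u = c * a (ℓ - 1) := mul_div_cancel₀ _ ha2'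
  have hJ2' : a' (ℓ + 1) * a' (ℓ - 1) = c ^ 2 * (a (ℓ + 1) * a (ℓ - 1)) := by
    simpa [show 2 * ℓ - (ℓ - 1) = ℓ + 1 by omega] using hJ2 (ℓ - 1) le_rfl
  have hupper := fun k (hk : k ≤ ℓ) => upper_coeff_eq ha2' hu hJ1 hJ2' hJi hk
  have hlower := fun k (hk : k ≤ ℓ) => lower_coeff_eq hc hu hJ1 ha1 hJ2 hupper hk
  exact exists_diagonal_of_eq_mul_pow_mul hn (div_ne_zero hc (pow_ne_zero ℓ hu0)) hu0
    (coeff_eq_mul_pow_mul hu0 hupper hlower)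

/-- Generic reconstruction from the arithmetic diagonal invariants: if two
coefficient tuples `a, a' : {0, …, 2ℓ} → K` of binary forms in normal form are
generic (suitable coefficients nonzero) and their generic arithmetic diagonal
invariants `J₁ = a_ℓ`, `J_{2,j} = a_{2ℓ-j}·a_j`, `J_{i} = a_{ℓ+i}·a_{ℓ-1}^i`
agree up to rescaling by powers `c^(weight)` of some nonzero `c ∈ K`, then the
tuples are related by the action of a diagonal matrix up to a scalar. -/
theorem stmt7 {K : Type*} [Field K] [IsAlgClosed K] (n ℓ : ℕ) (hn : 1 ≤ n)
    (hℓ : 2 ≤ ℓ) (a a' : ℕ → K)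
    (ha1 : ∀ i, ℓ + 2 ≤ i → i ≤ 2 * ℓ → a i ≠ 0) (ha2 : a (ℓ - 1) ≠ 0)
    (ha1' : ∀ i, ℓ + 2 ≤ i → i ≤ 2 * ℓ → a' i ≠ 0) (ha2' : a' (ℓ - 1) ≠ 0)
    (c : K) (hc : c ≠ 0)
    (hJ1 : a' ℓ = c * a ℓ)
    (hJ2 : ∀ j ≤ ℓ - 1, a' (2 * ℓ - j) * a' j = c ^ 2 * (a (2 * ℓ - j) * a j))
    (hJi : ∀ i, 2 ≤ i → i ≤ ℓ →
      a' (ℓ + i) * a' (ℓ - 1) ^ i = c ^ (i + 1) * (a (ℓ + i) * a (ℓ - 1) ^ i)) :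
    ∃ lam mu e : K, lam ≠ 0 ∧ mu ≠ 0 ∧ e ≠ 0 ∧
      ∀ i ≤ 2 * ℓ, a' i = e * (lam ^ (i * n) * mu ^ ((2 * ℓ - i) * n) * a i) :=
  stmt7_general n ℓ hn hℓ a a' ha1 ha2 ha2' c hc hJ1 hJ2 hJi
end

section
/- Let K be an algebraically closed field of characteristic different from 2, let n ≥ 1 and ℓ ≥ 2 be integers, and set m = 2ℓ. For a coefficient tuple a : {0,…,m} → K and 3 ≤ i ≤ ℓ+1, write J_i(a) = a_{ℓ+i−1}·(a_{ℓ−1})^{i−1} and J'_i(a) = a_{ℓ+1−i}·(a_{ℓ+1})^{i−1}. Let a, a' : {0,…,m} → K be tuples such that: either (a_i ≠ 0 for all ℓ+1 ≤ i ≤ 2ℓ and a_{ℓ−1} ≠ 0) or (a_i ≠ 0 for all 0 ≤ i ≤ ℓ−1 and a_{ℓ+1} ≠ 0), and the same alternative holds for a'. Suppose there is a nonzero c ∈ K such that: a'_ℓ = c·a_ℓ; a'_{2ℓ−j}·a'_j = c²·a_{2ℓ−j}·a_j for all 0 ≤ j ≤ ℓ−1; J_i(a') + J'_i(a') = c^i·(J_i(a)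 + J'_i(a)) and J_i(a')·J'_i(a') = c^{2i}·J_i(a)·J'_i(a) for all 3 ≤ i ≤ ℓ+1; and J_i(a')·J'_j(a') + J'_i(a')·J_j(a') = c^{i+j}·(J_i(a)·J'_j(a) + J'_i(a)·J_j(a)) for all 3 ≤ i < j ≤ ℓ+1. Then there exist nonzero λ, μ, e ∈ K such that either a'_i = e·λ^{i·n}·μ^{(m−i)·n}·a_i for all 0 ≤ i ≤ m, or a'_i = e·λ^{i·n}·μ^{(m−i)·n}·a_{m−i} for all 0 ≤ i ≤ m. -/
/-!
The invariants `I₁`, `I_{2,j}` determine `a'_ℓ` and the products `a'_{2ℓ-j} a'_j`, while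
`I_{i,i,1}`, `I_{i,i,2}` determine the pair `{J_i(a'), J'_i(a')}` up to order. The mixed
invariants `I_{i,j}` force the same ordering for every `i`, and exchanging `J` with `J'` is the
swap `a_k ↦ a_{2ℓ-k}`, so up to that swap `J_i(a') = c^i J_i(a)` for all `i`. When `a'_{ℓ-1}` and
the upper half of `a'` are nonzero, these equalities give `a'_{ℓ+s} = c r^s a_{ℓ+s}` with
`r = c a_{ℓ-1} / a'_{ℓ-1}`, and the products `a'_{2ℓ-j} a'_j` then fix the lower half. The other
genericity condition is the swapped one, and `n`-th roots of `r` exist since `K` is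
algebraically closed.
-/

/-- The arithmetic diagonal invariant `J_i(a) = a_{ℓ+i-1} · a_{ℓ-1}^(i-1)`. -/
def dihedralJ {K : Type*} [Field K] (ℓ : ℕ) (a : ℕ → K) (i : ℕ) : K :=
  a (ℓ + i - 1) * a (ℓ - 1) ^ (i - 1)

/-- The conjugate arithmetic diagonal invariant `J'_i(a) = a_{ℓ+1-i} · a_{ℓ+1}^(i-1)`. -/
def dihedralJ' {K : Type*} [Field K] (ℓ : ℕ) (a : ℕ → K) (i : ℕ) : K :=
  a (ℓ + 1 - i) * a (ℓ + 1) ^ (i - 1)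

theorem eq_and_eq_or_eq_and_eq_of_add_eq_add_of_mul_eq_mul {R : Type*} [CommRing R]
    [NoZeroDivisors R] {x y u v : R} (hadd : x + y = u + v) (hmul : x * y = u * v) :
    (x = u ∧ y = v) ∨ (x = v ∧ y = u) := by
  have h : (x - u) * (x - v) = 0 := by linear_combination x * hadd - hmul
  rcases mul_eq_zero.mp h with h | h
  · exact Or.inl ⟨sub_eq_zero.mp h, by linear_combination hadd - h⟩
  · exact Or.inr ⟨sub_eq_zero.mp h, by linear_combination hadd - h⟩

theorem forall_eq_and_eq_or_forall_eq_and_eq {ι R : Type*} [CommRing R] [NoZeroDivisors R]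
    {s : Set ι} {x y u v : ι → R}
    (hadd : ∀ i ∈ s, x i + y i = u i + v i) (hmul : ∀ i ∈ s, x i * y i = u i * v i)
    (hmixed : ∀ i ∈ s, ∀ j ∈ s, i ≠ j → x i * y j + y i * x j = u i * v j + v i * u j) :
    (∀ i ∈ s, x i = u i ∧ y i = v i) ∨ (∀ i ∈ s, x i = v i ∧ y i = u i) := by
  have hpair i (hi : i ∈ s) := eq_and_eq_or_eq_and_eq_of_add_eq_add_of_mul_eq_mul
    (hadd i hi) (hmul i hi)
  by_cases hsame : ∀ i ∈ s, x i = u i ∧ y i = v i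
  · exact Or.inl hsame
  push Not at hsame
  obtain ⟨i, hi, hne⟩ := hsame
  obtain ⟨hxi, hyi⟩ := (hpair i hi).resolve_left fun h => hne h.1 h.2
  have huvi : u i ≠ v i := fun h => hne (hxi.trans h.symm) (hyi.trans h)
  refine Or.inr fun j hj => (hpair j hj).elim (fun ⟨hxj, hyj⟩ => ?_) id
  have hji : i ≠ j := by rintro rfl; exact hne hxj hyj
  have hprod : (u i - v i) * (u j - v j) = 0 := by
    have hij := hmixed i hi j hj hji
    rw [hxi, hyi, hxj, hyj] at hij
    linear_combination hij
  have huvj : u j = v j :=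
    sub_eq_zero.mp ((mul_eq_zero.mp hprod).resolve_left (sub_ne_zero.mpr huvi))
  exact ⟨hxj.trans huvj, hyj.trans huvj.symm⟩

def dihedralSwap {α : Type*} (ℓ : ℕ) (a : ℕ → α) : ℕ → α := fun k => a (2 * ℓ - k)

theorem dihedralSwap_dihedralSwap {α : Type*} {ℓ k : ℕ} {a : ℕ → α} (hk : k ≤ 2 * ℓ) :
    dihedralSwap ℓ (dihedralSwap ℓ a) k = a k := by
  simp only [dihedralSwap, Nat.sub_sub_self hk]

section Dihedral

variable {K : Type*} [Field K] {ℓ : ℕ} {c : K} {a a' b : ℕ → K}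

theorem dihedralJ_dihedralSwap (hℓ : 1 ≤ ℓ) {i : ℕ} (hi : 1 ≤ i) :
    dihedralJ ℓ (dihedralSwap ℓ a) i = dihedralJ' ℓ a i := by
  simp only [dihedralJ, dihedralJ', dihedralSwap]
  rw [show 2 * ℓ - (ℓ + i - 1) = ℓ + 1 - i by omega, show 2 * ℓ - (ℓ - 1) = ℓ + 1 by omega]

theorem dihedralJ'_dihedralSwap {i : ℕ} (hi : i ≤ ℓ + 1) :
    dihedralJ' ℓ (dihedralSwap ℓ a) i = dihedralJ ℓ a i := by
  simp only [dihedralJ, dihedralJ', dihedralSwap]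
  rw [show 2 * ℓ - (ℓ + 1 - i) = ℓ + i - 1 by omega, show 2 * ℓ - (ℓ + 1) = ℓ - 1 by omega]

theorem dihedralJ_add_one (a : ℕ → K) (s : ℕ) :
    dihedralJ ℓ a (s + 1) = a (ℓ + s) * a (ℓ - 1) ^ s := rfl

/-- The generic invariants of `a` and `a'` define the same point of the weighted projective
space, with rescaling factor `c`. -/
structure InvariantRelations (ℓ : ℕ) (c : K) (a a' : ℕ → K) : Prop where
  degree_one : a' ℓ = c * a ℓ
  degree_two : ∀ j ≤ ℓ - 1, a' (2 * ℓ - j) * a' j = c ^ 2 * (a (2 * ℓ - j) * a j)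
  sum : ∀ i, 3 ≤ i → i ≤ ℓ + 1 →
    dihedralJ ℓ a' i + dihedralJ' ℓ a' i = c ^ i * (dihedralJ ℓ a i + dihedralJ' ℓ a i)
  prod : ∀ i, 3 ≤ i → i ≤ ℓ + 1 →
    dihedralJ ℓ a' i * dihedralJ' ℓ a' i = c ^ (2 * i) * (dihedralJ ℓ a i * dihedralJ' ℓ a i)
  mixed : ∀ i j, 3 ≤ i → i < j → j ≤ ℓ + 1 →
    dihedralJ ℓ a' i * dihedralJ' ℓ a' j + dihedralJ' ℓ a' i * dihedralJ ℓ a' j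
      = c ^ (i + j) * (dihedralJ ℓ a i * dihedralJ' ℓ a j + dihedralJ' ℓ a i * dihedralJ ℓ a j)

namespace InvariantRelations

theorem swap_right (hℓ : 1 ≤ ℓ) (h : InvariantRelations ℓ c a a') :
    InvariantRelations ℓ c a (dihedralSwap ℓ a') where
  degree_one := by simpa [dihedralSwap, two_mul] using h.degree_one
  degree_two j hj := by
    simp only [dihedralSwap, Nat.sub_sub_self (show j ≤ 2 * ℓ by omega)]
    linear_combination h.degree_two j hj
  sum i hi hi' := by
    rw [dihedralJ_dihedralSwap hℓ (by omega), dihedralJ'_dihedralSwap hi']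
    linear_combination h.sum i hi hi'
  prod i hi hi' := by
    rw [dihedralJ_dihedralSwap hℓ (by omega), dihedralJ'_dihedralSwap hi']
    linear_combination h.prod i hi hi'
  mixed i j hi hij hj := by
    rw [dihedralJ_dihedralSwap hℓ (i := i) (by omega), dihedralJ'_dihedralSwap (i := i) (by omega),
      dihedralJ_dihedralSwap hℓ (i := j) (by omega), dihedralJ'_dihedralSwap hj]
    linear_combination h.mixed i j hi hij hj

theorem dihedralJ_eq_or (h : InvariantRelations ℓ c a a') :
    (∀ i ∈ Set.Icc 3 (ℓ + 1), dihedralJ ℓ a' i = c ^ i * dihedralJ ℓ a i ∧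
      dihedralJ' ℓ a' i = c ^ i * dihedralJ' ℓ a i) ∨
    (∀ i ∈ Set.Icc 3 (ℓ + 1), dihedralJ ℓ a' i = c ^ i * dihedralJ' ℓ a i ∧
      dihedralJ' ℓ a' i = c ^ i * dihedralJ ℓ a i) := by
  refine forall_eq_and_eq_or_forall_eq_and_eq (fun i hi => ?_) (fun i hi => ?_) ?_
  · linear_combination h.sum i hi.1 hi.2
  · linear_combination h.prod i hi.1 hi.2
  intro i hi j hj hij
  rcases hij.lt_or_gt with hij | hji
  · linear_combination h.mixed i j hi.1 hij hj.2
  · linear_combination h.mixed j i hj.1 hji hi.2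

end InvariantRelations

/-- The weights `λ^k μ^(2ℓ-k)` stand for the `λ^(k n) μ^((2ℓ-k) n)` of the diagonal action;
`n`-th roots are taken only at the end. -/
def IsDiagonalImage (ℓ : ℕ) (a' b : ℕ → K) : Prop :=
  ∃ e lam mu : K, e ≠ 0 ∧ lam ≠ 0 ∧ mu ≠ 0 ∧
    ∀ k ≤ 2 * ℓ, a' k = e * (lam ^ k * mu ^ (2 * ℓ - k) * b k)

namespace IsDiagonalImage

theorem congr_right {b' : ℕ → K} (h : IsDiagonalImage ℓ a' b) (hb : ∀ k ≤ 2 * ℓ, b k = b' k) :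
    IsDiagonalImage ℓ a' b' := by
  obtain ⟨e, lam, mu, he, hlam, hmu, h⟩ := h
  exact ⟨e, lam, mu, he, hlam, hmu, fun k hk => by rw [h k hk, hb k hk]⟩

theorem of_dihedralSwap_left (h : IsDiagonalImage ℓ (dihedralSwap ℓ a') b) :
    IsDiagonalImage ℓ a' (dihedralSwap ℓ b) := by
  obtain ⟨e, lam, mu, he, hlam, hmu, h⟩ := h
  refine ⟨e, mu, lam, he, hmu, hlam, fun k hk => ?_⟩
  have hk' := h (2 * ℓ - k) (Nat.sub_le _ _)
  simp only [dihedralSwap, Nat.sub_sub_self hk] at hk' ⊢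
  linear_combination hk'

theorem exists_pow [IsAlgClosed K] {n : ℕ} (hn : 1 ≤ n) (h : IsDiagonalImage ℓ a' b) :
    ∃ lam mu e : K, lam ≠ 0 ∧ mu ≠ 0 ∧ e ≠ 0 ∧
      ∀ i ≤ 2 * ℓ, a' i = e * (lam ^ (i * n) * mu ^ ((2 * ℓ - i) * n) * b i) := by
  obtain ⟨e, lam, mu, he, hlam, hmu, h⟩ := h
  obtain ⟨lam, rfl⟩ := IsAlgClosed.exists_pow_nat_eq lam (show 0 < n by omega)
  obtain ⟨mu, rfl⟩ := IsAlgClosed.exists_pow_nat_eq mu (show 0 < n by omega)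
  refine ⟨lam, mu, e, ne_zero_pow (by omega) hlam, ne_zero_pow (by omega) hmu, he, fun i hi => ?_⟩
  rw [pow_mul', pow_mul']
  exact h i hi

end IsDiagonalImage

theorem eq_mul_pow_of_dihedralJ_eq {r : K} (s : ℕ) (hc : c ≠ 0) (hb : b (ℓ - 1) ≠ 0)
    (hr : a' (ℓ - 1) * r = c * b (ℓ - 1))
    (hJ : dihedralJ ℓ a' (s + 1) = c ^ (s + 1) * dihedralJ ℓ b (s + 1)) :
    a' (ℓ + s) = c * r ^ s * b (ℓ + s) := by
  have ha' : a' (ℓ - 1) ≠ 0 := left_ne_zero_of_mul (hr ▸ mul_ne_zero hc hb)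
  apply mul_right_cancel₀ (pow_ne_zero s ha')
  rw [dihedralJ_add_one, dihedralJ_add_one] at hJ
  calc a' (ℓ + s) * a' (ℓ - 1) ^ s = c * b (ℓ + s) * (c * b (ℓ - 1)) ^ s := by
        rw [hJ]; ring
    _ = c * r ^ s * b (ℓ + s) * a' (ℓ - 1) ^ s := by rw [← hr]; ring

theorem isDiagonalImage_of_dihedralJ_eq (hℓ : 1 ≤ ℓ) (hc : c ≠ 0)
    (hup : ∀ i, ℓ + 1 ≤ i → i ≤ 2 * ℓ → a' i ≠ 0) (hm1 : a' (ℓ - 1) ≠ 0)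
    (hdeg1 : a' ℓ = c * b ℓ)
    (hdeg2 : ∀ j ≤ ℓ - 1, a' (2 * ℓ - j) * a' j = c ^ 2 * (b (2 * ℓ - j) * b j))
    (hJ : ∀ i ∈ Set.Icc 3 (ℓ + 1), dihedralJ ℓ a' i = c ^ i * dihedralJ ℓ b i) :
    IsDiagonalImage ℓ a' b := by
  have htop := hdeg2 (ℓ - 1) le_rfl
  rw [show 2 * ℓ - (ℓ - 1) = ℓ + 1 by omega] at htop
  have hb : b (ℓ - 1) ≠ 0 := by
    intro h0
    rw [h0, mul_zero, mul_zero] at htop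
    exact mul_ne_zero (hup _ le_rfl (by omega)) hm1 htop
  set r := c * b (ℓ - 1) / a' (ℓ - 1)
  have hr0 : r ≠ 0 := div_ne_zero (mul_ne_zero hc hb) hm1
  have hr : a' (ℓ - 1) * r = c * b (ℓ - 1) := mul_div_cancel₀ _ hm1
  have hupper : ∀ s ≤ ℓ, a' (ℓ + s) = c * r ^ s * b (ℓ + s) := by
    intro s hs
    refine eq_mul_pow_of_dihedralJ_eq s hc hb hr ?_
    obtain _ | _ | s := s
    · simpa [dihedralJ] using hdeg1
    · simpa [dihedralJ] using htop
    · exact hJ (s + 3) ⟨by omega, by omega⟩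
  have hlower : ∀ k < ℓ, a' k * r ^ (ℓ - k) = c * b k := by
    intro k hk
    have hrefl := hupper (ℓ - k) (by omega)
    rw [show ℓ + (ℓ - k) = 2 * ℓ - k by omega] at hrefl
    have hcb : c * b (2 * ℓ - k) ≠ 0 := fun h0 =>
      hup (2 * ℓ - k) (by omega) (by omega) (by linear_combination hrefl + r ^ (ℓ - k) * h0)
    apply mul_left_cancel₀ hcb
    linear_combination hdeg2 k (by omega) - a' k * hrefl
  refine ⟨c / r ^ ℓ, r, 1, div_ne_zero hc (pow_ne_zero _ hr0), hr0, one_ne_zero, fun k hk => ?_⟩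
  rw [one_pow, mul_one, ← mul_assoc, div_mul_eq_mul_div, div_mul_eq_mul_div,
    eq_div_iff (pow_ne_zero _ hr0)]
  rcases le_or_gt ℓ k with hlk | hkl
  · obtain ⟨s, rfl⟩ := Nat.exists_eq_add_of_le hlk
    rw [hupper s (by omega), pow_add]
    ring
  · calc a' k * r ^ ℓ = a' k * r ^ (ℓ - k) * r ^ k := by
          rw [mul_assoc, ← pow_add, Nat.sub_add_cancel hkl.le]
      _ = c * r ^ k * b k := by rw [hlower k hkl]; ring

theorem InvariantRelations.isDiagonalImage_or_of_upper (hℓ : 1 ≤ ℓ) (hc : c ≠ 0)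
    (hup : ∀ i, ℓ + 1 ≤ i → i ≤ 2 * ℓ → a' i ≠ 0) (hm1 : a' (ℓ - 1) ≠ 0)
    (hrel : InvariantRelations ℓ c a a') :
    IsDiagonalImage ℓ a' a ∨ IsDiagonalImage ℓ a' (dihedralSwap ℓ a) := by
  rcases hrel.dihedralJ_eq_or with h | h
  · exact Or.inl <| isDiagonalImage_of_dihedralJ_eq hℓ hc hup hm1 hrel.degree_one
      hrel.degree_two fun i hi => (h i hi).1
  refine Or.inr <| isDiagonalImage_of_dihedralJ_eq hℓ hc hup hm1 ?_ ?_ fun i hi => ?_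
  · simpa [dihedralSwap, two_mul] using hrel.degree_one
  · intro j hj
    simp only [dihedralSwap, Nat.sub_sub_self (show j ≤ 2 * ℓ by omega)]
    linear_combination hrel.degree_two j hj
  · rw [dihedralJ_dihedralSwap hℓ (by linarith [hi.1])]
    exact (h i hi).1

theorem InvariantRelations.isDiagonalImage_or (hℓ : 1 ≤ ℓ) (hc : c ≠ 0)
    (hgen : ((∀ i, ℓ + 1 ≤ i → i ≤ 2 * ℓ → a' i ≠ 0) ∧ a' (ℓ - 1) ≠ 0) ∨
      ((∀ i ≤ ℓ - 1, a' i ≠ 0) ∧ a' (ℓ + 1) ≠ 0))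
    (hrel : InvariantRelations ℓ c a a') :
    IsDiagonalImage ℓ a' a ∨ IsDiagonalImage ℓ a' (dihedralSwap ℓ a) := by
  rcases hgen with ⟨hup, hm1⟩ | ⟨hlow, hp1⟩
  · exact hrel.isDiagonalImage_or_of_upper hℓ hc hup hm1
  have hup' : ∀ i, ℓ + 1 ≤ i → i ≤ 2 * ℓ → dihedralSwap ℓ a' i ≠ 0 :=
    fun i _ _ => hlow (2 * ℓ - i) (by omega)
  have hm1' : dihedralSwap ℓ a' (ℓ - 1) ≠ 0 := by
    rwa [dihedralSwap, show 2 * ℓ - (ℓ - 1) = ℓ + 1 by omega]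
  rcases (hrel.swap_right hℓ).isDiagonalImage_or_of_upper hℓ hc hup' hm1' with h | h
  · exact Or.inr h.of_dihedralSwap_left
  · exact Or.inl <| h.of_dihedralSwap_left.congr_right fun k hk => dihedralSwap_dihedralSwap hk

end Dihedral

theorem stmt8_general {K : Type*} [Field K] [IsAlgClosed K]
    (n ℓ : ℕ) (hn : 1 ≤ n) (hℓ : 2 ≤ ℓ) (a a' : ℕ → K)
    (hA' : ((∀ i, ℓ + 1 ≤ i → i ≤ 2 * ℓ → a' i ≠ 0) ∧ a' (ℓ - 1) ≠ 0) ∨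
           ((∀ i ≤ ℓ - 1, a' i ≠ 0) ∧ a' (ℓ + 1) ≠ 0))
    (c : K) (hc : c ≠ 0)
    (hI1 : a' ℓ = c * a ℓ)
    (hI2 : ∀ j ≤ ℓ - 1, a' (2 * ℓ - j) * a' j = c ^ 2 * (a (2 * ℓ - j) * a j))
    (hIii1 : ∀ i, 3 ≤ i → i ≤ ℓ + 1 →
      dihedralJ ℓ a' i + dihedralJ' ℓ a' i
        = c ^ i * (dihedralJ ℓ a i + dihedralJ' ℓ a i))
    (hIii2 : ∀ i, 3 ≤ i → i ≤ ℓ + 1 →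
      dihedralJ ℓ a' i * dihedralJ' ℓ a' i
        = c ^ (2 * i) * (dihedralJ ℓ a i * dihedralJ' ℓ a i))
    (hIij : ∀ i j, 3 ≤ i → i < j → j ≤ ℓ + 1 →
      dihedralJ ℓ a' i * dihedralJ' ℓ a' j + dihedralJ' ℓ a' i * dihedralJ ℓ a' j
        = c ^ (i + j) *
          (dihedralJ ℓ a i * dihedralJ' ℓ a j + dihedralJ' ℓ a i * dihedralJ ℓ a j)) :
    ∃ lam mu e : K, lam ≠ 0 ∧ mu ≠ 0 ∧ e ≠ 0 ∧
      ((∀ i ≤ 2 * ℓ, a' i = e * (lam ^ (i * n) * mu ^ ((2 * ℓ - i) * n) * a i)) ∨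
       (∀ i ≤ 2 * ℓ,
          a' i = e * (lam ^ (i * n) * mu ^ ((2 * ℓ - i) * n) * a (2 * ℓ - i)))) := by
  have hrel : InvariantRelations ℓ c a a' := ⟨hI1, hI2, hIii1, hIii2, hIij⟩
  rcases hrel.isDiagonalImage_or (by omega) hc hA' with h | h
  · obtain ⟨lam, mu, e, hlam, hmu, he, h⟩ := h.exists_pow hn
    exact ⟨lam, mu, e, hlam, hmu, he, Or.inl h⟩
  · obtain ⟨lam, mu, e, hlam, hmu, he, h⟩ := h.exists_pow hn
    exact ⟨lam, mu, e, hlam, hmu, he, Or.inr h⟩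

/-- Generic reconstruction from the arithmetic dihedral invariants: if two generic
coefficient tuples of binary forms in normal form have the same generic arithmetic
dihedral invariants (up to rescaling by `c^(weight)` for a nonzero `c`), then they
are related, up to a scalar, either by a diagonal matrix or by a diagonal matrix
composed with the swap `a_i ↦ a_{2ℓ-i}`. -/
theorem stmt8 {K : Type*} [Field K] [IsAlgClosed K] (hchar : ringChar K ≠ 2)
    (n ℓ : ℕ) (hn : 1 ≤ n) (hℓ : 2 ≤ ℓ) (a a' : ℕ → K)
    (hA : ((∀ i, ℓ + 1 ≤ i → i ≤ 2 * ℓ → a i ≠ 0) ∧ a (ℓ - 1) ≠ 0) ∨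
          ((∀ i ≤ ℓ - 1, a i ≠ 0) ∧ a (ℓ + 1) ≠ 0))
    (hA' : ((∀ i, ℓ + 1 ≤ i → i ≤ 2 * ℓ → a' i ≠ 0) ∧ a' (ℓ - 1) ≠ 0) ∨
           ((∀ i ≤ ℓ - 1, a' i ≠ 0) ∧ a' (ℓ + 1) ≠ 0))
    (c : K) (hc : c ≠ 0)
    (hI1 : a' ℓ = c * a ℓ)
    (hI2 : ∀ j ≤ ℓ - 1, a' (2 * ℓ - j) * a' j = c ^ 2 * (a (2 * ℓ - j) * a j))
    (hIii1 : ∀ i, 3 ≤ i → i ≤ ℓ + 1 →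
      dihedralJ ℓ a' i + dihedralJ' ℓ a' i
        = c ^ i * (dihedralJ ℓ a i + dihedralJ' ℓ a i))
    (hIii2 : ∀ i, 3 ≤ i → i ≤ ℓ + 1 →
      dihedralJ ℓ a' i * dihedralJ' ℓ a' i
        = c ^ (2 * i) * (dihedralJ ℓ a i * dihedralJ' ℓ a i))
    (hIij : ∀ i j, 3 ≤ i → i < j → j ≤ ℓ + 1 →
      dihedralJ ℓ a' i * dihedralJ' ℓ a' j + dihedralJ' ℓ a' i * dihedralJ ℓ a' j
        = c ^ (i + j) *
          (dihedralJ ℓ a i * dihedralJ' ℓ a j + dihedralJ' ℓ a i * dihedralJ ℓ a j)) :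
    ∃ lam mu e : K, lam ≠ 0 ∧ mu ≠ 0 ∧ e ≠ 0 ∧
      ((∀ i ≤ 2 * ℓ, a' i = e * (lam ^ (i * n) * mu ^ ((2 * ℓ - i) * n) * a i)) ∨
       (∀ i ≤ 2 * ℓ,
          a' i = e * (lam ^ (i * n) * mu ^ ((2 * ℓ - i) * n) * a (2 * ℓ - i)))) :=
  stmt8_general n ℓ hn hℓ a a' hA' c hc hI1 hI2 hIii1 hIii2 hIij
end
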